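/- For all complex x and all complex z with |z| < 1, the series L_ℓ(z) := ∑_{δ₁,…,δ_ℓ ≥ 1} δ₁^{ℓ−2} δ₂^{ℓ−3} ⋯ δ_{ℓ−2}^{1} δ_{ℓ−1}^{0} δ_ℓ^{−1} z^{δ₁⋯δ_ℓ} converges absolutely, and equals −∑_{δ₁,…,δ_{ℓ−1} ≥ 1} δ₁^{ℓ−2} ⋯ δ_{ℓ−2} Log(1 − z^{δ₁⋯δ_{ℓ−1}}), where Log is the principal branch of the logarithm. -/

import Mathlib

set_option maxHeartbeats 1000000

private lemma summable_pi_prod {g : ℕ+ → ℝ} (hg : Summable g) (hg0 : ∀ a, 0 ≤ g a) (n : ℕ) :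
    Summable (fun δ : Fin n → ℕ+ => ∏ j, g (δ j)) := by
  induction n with
  | zero =>
      simp only [Finset.univ_eq_empty, Finset.prod_empty]
      exact (hasSum_single (f := fun _ : Fin 0 → ℕ+ => (1:ℝ)) default
        (fun b hb => absurd (Subsingleton.elim b default) hb)).summable
  | succ n ih =>
      have h2 : Summable (fun p : ℕ+ × (Fin n → ℕ+) => g p.1 * ∏ j, g (p.2 j)) :=
        Summable.mul_of_nonneg (f := g) (g := fun δ : Fin n → ℕ+ => ∏ j, g (δ j))
          hg ih hg0 (fun δ => Finset.prod_nonneg fun j _ => hg0 _)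
      rw [← (Fin.snocEquiv (fun _ => ℕ+)).summable_iff]
      have he : ((fun δ : Fin (n+1) → ℕ+ => ∏ j, g (δ j)) ∘ (Fin.snocEquiv fun _ => ℕ+)) =
          fun p => g p.1 * ∏ j, g (p.2 j) := by
        funext p
        simp only [Function.comp_apply, Fin.snocEquiv_apply, Fin.prod_univ_castSucc,
          Fin.snoc_castSucc, Fin.snoc_last, mul_comm]
      rw [he]
      exact h2

theorem L_summable_and_eq (ℓ : ℕ) (hℓ : 2 ≤ ℓ) (x z : ℂ) (hz : ‖z‖ < 1) :
    Summable (fun δ : Fin ℓ → ℕ+ =>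
      ‖(∏ j, ((δ j : ℕ) : ℂ) ^ ((ℓ : ℤ) - 2 - (j : ℤ))) *
        z ^ (∏ j, (δ j : ℕ))‖) ∧
    (∑' δ : Fin ℓ → ℕ+,
        (∏ j, ((δ j : ℕ) : ℂ) ^ ((ℓ : ℤ) - 2 - (j : ℤ))) * z ^ (∏ j, (δ j : ℕ))) =
      -∑' δ : Fin (ℓ - 1) → ℕ+,
        (∏ j, ((δ j : ℕ) : ℂ) ^ ((ℓ : ℤ) - 2 - (j : ℤ))) *
          Complex.log (1 - z ^ (∏ j, (δ j : ℕ))) := by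
  obtain ⟨m, rfl⟩ : ∃ m, ℓ = m + 1 := ⟨ℓ - 1, by omega⟩
  set F : (Fin (m + 1) → ℕ+) → ℂ := fun δ =>
    (∏ j, ((δ j : ℕ) : ℂ) ^ (((m + 1 : ℕ) : ℤ) - 2 - (j : ℤ))) * z ^ (∏ j, (δ j : ℕ)) with hF_def
  have hz0 : (0:ℝ) ≤ ‖z‖ := norm_nonneg z
  set r : ℝ := ‖z‖ ^ ((m + 1 : ℝ)⁻¹) with hr_def
  have hr0 : 0 ≤ r := Real.rpow_nonneg hz0 _
  have hr1 : r < 1 := Real.rpow_lt_one hz0 hz (by positivity)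
  set g : ℕ+ → ℝ := fun n => ((n : ℕ) : ℝ) ^ (m + 1) * r ^ (n : ℕ) with hg_def
  have hg : Summable g := by
    have := summable_pow_mul_geometric_of_norm_lt_one (R := ℝ) (m + 1)
      (r := r) (by rwa [Real.norm_of_nonneg hr0])
    exact this.comp_injective (fun a b h => PNat.coe_injective h)
  have hg0 : ∀ a, 0 ≤ g a := fun a => by positivity
  have hbound : ∀ δ : Fin (m + 1) → ℕ+, ‖F δ‖ ≤ ∏ j, g (δ j) := by
    intro δ
    have h1 : ∀ j : Fin (m + 1), (1:ℝ) ≤ ((δ j : ℕ) : ℝ) := by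
      intro j; exact_mod_cast (δ j).one_le
    have habs : ‖F δ‖ =
        (∏ j, ((δ j : ℕ) : ℝ) ^ (((m + 1 : ℕ) : ℤ) - 2 - (j : ℤ))) *
          ‖z‖ ^ (∏ j, (δ j : ℕ)) := by
      rw [hF_def, norm_mul, norm_prod, norm_pow]
      congr 1
      refine Finset.prod_congr rfl fun j _ => ?_
      rw [norm_zpow, Complex.norm_natCast]
    rw [habs]
    have hA : (∏ j, ((δ j : ℕ) : ℝ) ^ (((m + 1 : ℕ) : ℤ) - 2 - (j : ℤ))) ≤
        ∏ j, ((δ j : ℕ) : ℝ) ^ (m + 1) := by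
      refine Finset.prod_le_prod (fun j _ => zpow_nonneg (by positivity) _) (fun j _ => ?_)
      have := zpow_le_zpow_right₀ (h1 j)
        (show ((m + 1 : ℕ) : ℤ) - 2 - (j : ℤ) ≤ ((m + 1 : ℕ) : ℤ) by omega)
      rwa [zpow_natCast] at this
    have hB : ‖z‖ ^ (∏ j, (δ j : ℕ)) ≤ ∏ j, r ^ (δ j : ℕ) := by
      rw [Finset.prod_pow_eq_pow_sum]
      set P : ℕ := ∏ j, (δ j : ℕ) with hP
      set S : ℕ := ∑ j, (δ j : ℕ) with hS
      have hP1 : 1 ≤ P := by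
        rw [hP]; exact Finset.one_le_prod' (fun j _ => (δ j).one_le)
      have hSP : S ≤ (m + 1) * P := by
        have : ∀ j : Fin (m + 1), (δ j : ℕ) ≤ P := by
          intro j
          exact Finset.single_le_prod' (f := fun i : Fin (m+1) => ((δ i : ℕ)))
            (fun i _ => (δ i).one_le) (Finset.mem_univ j)
        calc S ≤ ∑ _j : Fin (m + 1), P := Finset.sum_le_sum (fun j _ => this j)
          _ = (m + 1) * P := by simp [Finset.sum_const, Finset.card_univ, mul_comm]
      rcases eq_or_lt_of_le hz0 with h0 | h0
      · have hz' : ‖z‖ = 0 := h0.symm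
        have hS1 : 1 ≤ S := le_trans (δ 0).one_le
          (Finset.single_le_sum (f := fun j => ((δ j : ℕ))) (fun i _ => Nat.zero_le _)
            (Finset.mem_univ 0))
        rw [hz', hr_def, hz', Real.zero_rpow (by positivity), zero_pow (by omega),
          zero_pow (by omega)]
      · have hle1 : ‖z‖ ≤ 1 := le_of_lt hz
        have h1' : r ^ S = ‖z‖ ^ ((m + 1 : ℝ)⁻¹ * S) := by
          rw [hr_def, ← Real.rpow_natCast (‖z‖ ^ ((m + 1 : ℝ)⁻¹)) S,
            ← Real.rpow_mul hz0]
        have h2' : ‖z‖ ^ P = ‖z‖ ^ ((P : ℝ)) := by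
          rw [Real.rpow_natCast]
        rw [h1', h2']
        apply Real.rpow_le_rpow_of_exponent_ge h0 hle1
        rw [inv_mul_le_iff₀ (by positivity)]
        have h3 : (S:ℝ) ≤ (((m + 1) * P : ℕ) : ℝ) := by exact_mod_cast hSP
        push_cast at h3 ⊢
        nlinarith [h3]
    refine le_trans (mul_le_mul hA hB (by positivity)
      (Finset.prod_nonneg (fun j _ => by positivity))) (le_of_eq ?_)
    rw [← Finset.prod_mul_distrib]
  have hsum_abs : Summable (fun δ : Fin (m + 1) → ℕ+ => ‖F δ‖) := by
    refine Summable.of_nonneg_of_le (fun δ => norm_nonneg _) hbound ?_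
    exact summable_pi_prod hg hg0 (m + 1)
  have hF : Summable F := by
    apply Summable.of_norm
    exact hsum_abs
  refine ⟨hsum_abs, ?_⟩
  -- now the tsum identity
  set E : (Fin m → ℕ+) × ℕ+ ≃ (Fin (m + 1) → ℕ+) :=
    (Equiv.prodComm _ _).trans (Fin.snocEquiv (fun _ => ℕ+)) with hE_def
  have hEapp : ∀ p : (Fin m → ℕ+) × ℕ+, E p = Fin.snoc p.1 p.2 := by
    intro p; funext i; simp [hE_def, Fin.snocEquiv]
  have hsE : Summable (F ∘ E) := E.summable_iff.2 hF
  have hstep1 : (∑' δ : Fin (m + 1) → ℕ+, F δ) =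
      ∑' δ' : Fin m → ℕ+, ∑' n : ℕ+, F (Fin.snoc δ' n) := by
    rw [← E.tsum_eq F]
    have h1 := hsE.tsum_prod' (fun b => hsE.prod_factor b)
    refine h1.trans ?_
    exact tsum_congr fun δ' => tsum_congr fun n => by rw [Function.comp_apply, hEapp]
  rw [hstep1]
  rw [← tsum_neg]
  refine tsum_congr fun δ' => ?_
  set A : ℂ := ∏ j : Fin m, ((δ' j : ℕ) : ℂ) ^ (((m + 1 : ℕ) : ℤ) - 2 - (j : ℤ)) with hA_def
  set N : ℕ := ∏ j, (δ' j : ℕ) with hN_def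
  have hN1 : 1 ≤ N := Finset.one_le_prod' (fun j _ => (δ' j).one_le)
  set w : ℂ := z ^ N with hw_def
  have hw : ‖w‖ < 1 := by
    rw [hw_def, norm_pow]
    calc ‖z‖ ^ N ≤ ‖z‖ ^ 1 := pow_le_pow_of_le_one (norm_nonneg z)
          (le_of_lt hz) hN1
      _ = ‖z‖ := pow_one _
      _ < 1 := hz
  have hterm : ∀ n : ℕ+, F (Fin.snoc δ' n) = A * (((n : ℕ) : ℂ)⁻¹ * w ^ (n : ℕ)) := by
    intro n
    have hprod1 : (∏ j : Fin (m + 1), (((Fin.snoc δ' n : Fin (m+1) → ℕ+) j : ℕ) : ℂ) ^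
        (((m + 1 : ℕ) : ℤ) - 2 - (j : ℤ))) = A * ((n : ℕ) : ℂ)⁻¹ := by
      rw [Fin.prod_univ_castSucc]
      congr 1
      · rw [hA_def]
        refine Finset.prod_congr rfl fun j _ => ?_
        rw [Fin.snoc_castSucc]
        norm_num [Fin.coe_castSucc]
      · rw [Fin.snoc_last]
        have : ((m + 1 : ℕ) : ℤ) - 2 - ((Fin.last m : Fin (m+1)) : ℤ) = -1 := by
          simp [Fin.val_last]; omega
        rw [this, zpow_neg_one]
    have hprod2 : (∏ j : Fin (m + 1), ((Fin.snoc δ' n : Fin (m+1) → ℕ+) j : ℕ)) = N * n := by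
      rw [Fin.prod_univ_castSucc, Fin.snoc_last, hN_def]
      congr 1
      exact Finset.prod_congr rfl fun j _ => by rw [Fin.snoc_castSucc]
    rw [hF_def]
    simp only
    rw [hprod1, hprod2, pow_mul, ← hw_def, mul_assoc]
  have hHS : HasSum (fun n : ℕ+ => ((n : ℕ) : ℂ)⁻¹ * w ^ (n : ℕ)) (-Complex.log (1 - w)) := by
    have h0 := Complex.hasSum_taylorSeries_neg_log hw
    have hinj : Function.Injective (fun n : ℕ+ => (n : ℕ)) := fun a b h => PNat.coe_injective h
    have := (hinj.hasSum_iff (f := fun n : ℕ => w ^ n / n) ?_).2 h0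
    · refine HasSum.congr_fun this ?_
      intro n
      simp only [Function.comp_apply]
      rw [div_eq_mul_inv, mul_comm]
    · intro x hx
      have : x = 0 := by
        by_contra h
        exact hx ⟨⟨x, Nat.pos_of_ne_zero h⟩, rfl⟩
      simp [this]
  calc (∑' n : ℕ+, F (Fin.snoc δ' n)) = ∑' n : ℕ+, A * (((n : ℕ) : ℂ)⁻¹ * w ^ (n : ℕ)) :=
        tsum_congr fun n => hterm n
    _ = A * (-Complex.log (1 - w)) := (hHS.mul_left A).tsum_eq
    _ = -(A * Complex.log (1 - w)) := by ring
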